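/- For every natural number k, every real λ, and every real t with |λt| < 1, one has (1/k!)(e_λ(t) − 1)^k = Σ_{n=0}^∞ S_{2,λ}(n,k) t^n/n!, where the series on the right converges; moreover S_{2,λ}(n,k) = 0 for n < k. -/
import Mathlib


noncomputable section

/-- Generalized falling factorial `(x)_{n,λ} = x(x-λ)⋯(x-(n-1)λ)`, with `(x)_{0,λ} = 1`. -/
def dff (lam x : ℝ) (n : ℕ) : ℝ := ∏ i ∈ Finset.range n, (x - i * lam)

/-- Degenerate exponential `e_λ(y) = ∑_{n=0}^∞ (1)_{n,λ} y^n / n!`. -/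
def dexp (lam y : ℝ) : ℝ := ∑' n : ℕ, dff lam 1 n * y ^ n / n.factorial

/-- Truncated degenerate exponential tail
`T_n(y) = e_λ(y) - ∑_{k=0}^n (1)_{k,λ} y^k / k!`. -/
def dtail (lam y : ℝ) (n : ℕ) : ℝ :=
  dexp lam y - ∑ k ∈ Finset.range (n + 1), dff lam 1 k * y ^ k / k.factorial

/-- Degenerate Stirling number of the second kind
`S_{2,λ}(n,k) = (1/k!) ∑_{j=0}^k (-1)^{k-j} C(k,j) (j)_{n,λ}`. -/
def dStirling (lam : ℝ) (n k : ℕ) : ℝ :=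
  (1 / (k.factorial : ℝ)) *
    ∑ j ∈ Finset.range (k + 1), (-1 : ℝ) ^ (k - j) * (k.choose j : ℝ) * dff lam j n

lemma dff_succ (lam x : ℝ) (n : ℕ) :
    dff lam x (n + 1) = dff lam x n * (x - n * lam) := Finset.prod_range_succ _ _

lemma dff_zero' (lam x : ℝ) : dff lam x 0 = 1 := rfl

/-- Vandermonde identity for the generalized falling factorial. -/
lemma dff_vandermonde (lam x y : ℝ) (n : ℕ) :
    dff lam (x + y) n = ∑ m ∈ Finset.range (n + 1),
      (n.choose m : ℝ) * dff lam x m * dff lam y (n - m) := by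
  induction n with
  | zero => simp [dff]
  | succ n ih =>
    have e1 : ∀ m ∈ Finset.range (n + 1),
        ((n + 1).choose (m + 1) : ℝ) * dff lam x (m + 1) * dff lam y (n + 1 - (m + 1))
        = (n.choose m : ℝ) * dff lam x (m + 1) * dff lam y (n - m)
          + (n.choose (m + 1) : ℝ) * dff lam x (m + 1) * dff lam y (n - m) := by
      intro m hm
      have h : n + 1 - (m + 1) = n - m := by omega
      rw [h, Nat.choose_succ_succ]
      push_cast
      ring
    have e2 : (∑ m ∈ Finset.range (n + 1),
          (n.choose (m + 1) : ℝ) * dff lam x (m + 1) * dff lam y (n - m))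
        + (1 : ℝ) * dff lam x 0 * dff lam y (n + 1)
        = ∑ m ∈ Finset.range (n + 1),
            (n.choose m : ℝ) * dff lam x m * dff lam y (n + 1 - m) := by
      have h := Finset.sum_range_succ'
        (fun m => (n.choose m : ℝ) * dff lam x m * dff lam y (n + 1 - m)) (n + 1)
      rw [Finset.sum_range_succ] at h
      simp only [Nat.choose_succ_self, Nat.cast_zero, zero_mul, add_zero,
        Nat.choose_zero_right, Nat.cast_one, Nat.succ_sub_succ, Nat.sub_zero] at h ⊢
      rw [← h]
    have key : ∑ m ∈ Finset.range (n + 1 + 1),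
          ((n + 1).choose m : ℝ) * dff lam x m * dff lam y (n + 1 - m)
        = ∑ m ∈ Finset.range (n + 1),
            (n.choose m : ℝ) * dff lam x m * dff lam y (n - m) * ((x + y) - n * lam) := by
      rw [Finset.sum_range_succ']
      simp only [Nat.choose_zero_right, Nat.cast_one, Nat.sub_zero]
      rw [Finset.sum_congr rfl e1, Finset.sum_add_distrib, add_assoc, e2,
        ← Finset.sum_add_distrib]
      apply Finset.sum_congr rfl
      intro m hm
      rw [Finset.mem_range] at hm
      have hm' : m ≤ n := by omega
      have h1 : n + 1 - m = (n - m) + 1 := by omega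
      rw [dff_succ, h1, dff_succ]
      have h2 : ((n - m : ℕ) : ℝ) = (n : ℝ) - (m : ℝ) := Nat.cast_sub hm'
      rw [h2]
      ring
    rw [key, ← Finset.sum_mul, ← ih, dff_succ]

/-- Ratio-test summability of the degenerate exponential series. -/
lemma dff_summable_norm (lam x t : ℝ) (ht : |lam * t| < 1) :
    Summable (fun n : ℕ => ‖dff lam x n * t ^ n / (n.factorial : ℝ)‖) := by
  rw [summable_norm_iff]
  set r : ℝ := (1 + |lam * t|) / 2 with hr
  have habs : (0:ℝ) ≤ |lam * t| := abs_nonneg _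
  have hr1 : r < 1 := by rw [hr]; linarith
  have hrpos : 0 < r - |lam * t| := by rw [hr]; linarith
  apply summable_of_ratio_norm_eventually_le hr1
  obtain ⟨N, hN⟩ := exists_nat_ge (|x| * |t| / (r - |lam * t|))
  rw [div_le_iff₀ hrpos] at hN
  filter_upwards [Filter.eventually_ge_atTop N] with n hn
  have hNn : (N : ℝ) ≤ (n : ℝ) := by exact_mod_cast hn
  have hfs : dff lam x (n + 1) * t ^ (n + 1) / ((n + 1).factorial : ℝ)
      = (dff lam x n * t ^ n / (n.factorial : ℝ)) * ((x - n * lam) * t / ((n : ℝ) + 1)) := by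
    have h1 : (n.factorial : ℝ) ≠ 0 := by positivity
    have h2 : ((n:ℝ) + 1) ≠ 0 := by positivity
    rw [dff_succ, pow_succ, Nat.factorial_succ]
    push_cast
    field_simp
  rw [hfs, norm_mul]
  rw [mul_comm r _]
  apply mul_le_mul_of_nonneg_left _ (norm_nonneg _)
  have hn1 : (0:ℝ) < (n : ℝ) + 1 := by positivity
  rw [Real.norm_eq_abs, abs_div, abs_mul, abs_of_pos hn1, div_le_iff₀ hn1]
  have h3 : |x - n * lam| ≤ |x| + n * |lam| := by
    calc |x - n * lam| ≤ |x| + |(n:ℝ) * lam| := abs_sub _ _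
    _ = |x| + n * |lam| := by rw [abs_mul, Nat.abs_cast]
  have h4 : |(n:ℝ)| * |lam| * |t| = (n:ℝ) * |lam * t| := by
    rw [Nat.abs_cast, abs_mul]; ring
  have h5 : (|x| + n * |lam|) * |t| ≤ r * ((n:ℝ) + 1) := by
    have habs' : |lam| * |t| = |lam * t| := (abs_mul lam t).symm
    have hx : |x| * |t| ≤ (n:ℝ) * (r - |lam * t|) := by
      calc |x| * |t| ≤ (N:ℝ) * (r - |lam * t|) := hN
      _ ≤ (n:ℝ) * (r - |lam * t|) := by
          apply mul_le_mul_of_nonneg_right hNn (le_of_lt hrpos)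
    have hrnn : (0:ℝ) < r := by rw [hr]; linarith
    nlinarith [abs_nonneg t, abs_nonneg x, Nat.cast_nonneg (α := ℝ) n]
  calc |x - n * lam| * |t| ≤ (|x| + n * |lam|) * |t| := by
        apply mul_le_mul_of_nonneg_right h3 (abs_nonneg t)
  _ ≤ r * ((n:ℝ) + 1) := h5



/-- The power series of the `j`-th power of the degenerate exponential. -/
lemma hasSum_dexp_pow (lam t : ℝ) (ht : |lam * t| < 1) (j : ℕ) :
    HasSum (fun n : ℕ => dff lam (j : ℝ) n * t ^ n / n.factorial) ((dexp lam t) ^ j) := by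
  induction j with
  | zero =>
    have hfun : (fun n : ℕ => dff lam ((0 : ℕ) : ℝ) n * t ^ n / n.factorial)
        = fun n : ℕ => if n = 0 then (1 : ℝ) else 0 := by
      funext n
      cases n with
      | zero => simp [dff]
      | succ m =>
        have h0 : dff lam (0 : ℝ) (m + 1) = 0 := by
          apply Finset.prod_eq_zero (Finset.mem_range.mpr (Nat.succ_pos m))
          simp
        simp [h0]
    rw [hfun, pow_zero]
    exact hasSum_ite_eq 0 1
  | succ j ih =>
    have h1 := dff_summable_norm lam (j : ℝ) t ht
    have h2 := dff_summable_norm lam 1 t ht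
    have key := hasSum_sum_range_mul_of_summable_norm h1 h2
    rw [ih.tsum_eq] at key
    have hdexp : (∑' n : ℕ, dff lam 1 n * t ^ n / (n.factorial : ℝ)) = dexp lam t := rfl
    rw [hdexp, ← pow_succ] at key
    have hfun : ∀ n : ℕ,
        (∑ m ∈ Finset.range (n + 1), (dff lam (j : ℝ) m * t ^ m / m.factorial) *
          (dff lam 1 (n - m) * t ^ (n - m) / (n - m).factorial))
        = dff lam ((j + 1 : ℕ) : ℝ) n * t ^ n / n.factorial := by
      intro n
      have hcast : ((j + 1 : ℕ) : ℝ) = (j : ℝ) + 1 := by push_cast; ring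
      rw [hcast, dff_vandermonde lam (j : ℝ) 1 n, Finset.sum_mul, Finset.sum_div]
      apply Finset.sum_congr rfl
      intro m hm
      rw [Finset.mem_range] at hm
      have hm' : m ≤ n := by omega
      have hpow : t ^ m * t ^ (n - m) = t ^ n := by
        rw [← pow_add]; congr 1; omega
      have hfact : ((n.choose m : ℝ)) * (m.factorial : ℝ) * ((n - m).factorial : ℝ)
          = (n.factorial : ℝ) := by
        exact_mod_cast congrArg (Nat.cast (R := ℝ))
          (Nat.choose_mul_factorial_mul_factorial hm')
      have e1 : (m.factorial : ℝ) ≠ 0 := by positivity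
      have e2 : ((n - m).factorial : ℝ) ≠ 0 := by positivity
      have e3 : (n.factorial : ℝ) ≠ 0 := by positivity
      field_simp
      linear_combination (dff lam (j:ℝ) m * dff lam 1 (n - m) * (n.factorial : ℝ)) * hpow
        - (dff lam (j:ℝ) m * dff lam 1 (n - m) * t ^ n) * hfact
    have : (fun n : ℕ => dff lam ((j + 1 : ℕ) : ℝ) n * t ^ n / n.factorial)
        = fun n : ℕ => ∑ m ∈ Finset.range (n + 1),
            (dff lam (j : ℝ) m * t ^ m / m.factorial) *
            (dff lam 1 (n - m) * t ^ (n - m) / (n - m).factorial) :=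
      funext fun n => (hfun n).symm
    rw [this]
    exact key

/-- The alternating-sum numerator of the degenerate Stirling number. -/
def Sd (lam : ℝ) (n k : ℕ) : ℝ :=
  ∑ j ∈ Finset.range (k + 1), (-1 : ℝ) ^ (k - j) * (k.choose j : ℝ) * dff lam j n

lemma dStirling_eq (lam : ℝ) (n k : ℕ) :
    dStirling lam n k = (1 / (k.factorial : ℝ)) * Sd lam n k := rfl

/-- Finite-difference recurrence for `Sd`. -/
lemma Sd_rec (lam : ℝ) (n k : ℕ) :
    Sd lam n (k + 1) = ∑ m ∈ Finset.range n,
      (n.choose m : ℝ) * dff lam 1 (n - m) * Sd lam m k := by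
  rw [Sd, Finset.sum_range_succ']
  have e1 : ∀ i ∈ Finset.range (k + 1),
      (-1 : ℝ) ^ (k + 1 - (i + 1)) * ((k + 1).choose (i + 1) : ℝ) * dff lam (↑(i + 1)) n
      = (-1 : ℝ) ^ (k - i) * (k.choose i : ℝ) * dff lam (↑(i + 1)) n
        + (-1 : ℝ) ^ (k - i) * (k.choose (i + 1) : ℝ) * dff lam (↑(i + 1)) n := by
    intro i hi
    have h : k + 1 - (i + 1) = k - i := by omega
    rw [h, Nat.choose_succ_succ]
    push_cast
    ring
  rw [Finset.sum_congr rfl e1, Finset.sum_add_distrib, add_assoc]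
  have e2 : (∑ i ∈ Finset.range (k + 1),
        (-1 : ℝ) ^ (k - i) * (k.choose (i + 1) : ℝ) * dff lam (↑(i + 1)) n)
      + (-1 : ℝ) ^ (k + 1 - 0) * ((k + 1).choose 0 : ℝ) * dff lam (↑(0 : ℕ)) n
      = - Sd lam n k := by
    have hSd : Sd lam n k
        = (∑ i ∈ Finset.range k,
            (-1 : ℝ) ^ (k - (i + 1)) * (k.choose (i + 1) : ℝ) * dff lam (↑(i + 1)) n)
          + (-1 : ℝ) ^ (k - 0) * (k.choose 0 : ℝ) * dff lam (↑(0 : ℕ)) n := by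
      rw [Sd]; exact Finset.sum_range_succ' _ k
    rw [hSd, Finset.sum_range_succ]
    simp only [Nat.choose_succ_self, Nat.cast_zero, mul_zero, zero_mul, add_zero,
      Nat.choose_zero_right, Nat.cast_one, Nat.sub_zero]
    rw [neg_add, ← Finset.sum_neg_distrib]
    apply congrArg₂
    · apply Finset.sum_congr rfl
      intro i hi
      rw [Finset.mem_range] at hi
      have h : k - i = (k - (i + 1)) + 1 := by omega
      rw [h, pow_succ]
      ring
    · rw [pow_succ]
      ring
  rw [e2]
  have e3 : (∑ i ∈ Finset.range (k + 1),
        (-1 : ℝ) ^ (k - i) * (k.choose i : ℝ) * dff lam (↑(i + 1)) n)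
      = ∑ m ∈ Finset.range (n + 1),
          (n.choose m : ℝ) * dff lam 1 (n - m) * Sd lam m k := by
    have e4 : ∀ i ∈ Finset.range (k + 1),
        (-1 : ℝ) ^ (k - i) * (k.choose i : ℝ) * dff lam (↑(i + 1)) n
        = ∑ m ∈ Finset.range (n + 1), (n.choose m : ℝ) * dff lam 1 (n - m) *
            ((-1 : ℝ) ^ (k - i) * (k.choose i : ℝ) * dff lam (↑i) m) := by
      intro i hi
      have hcast : ((i + 1 : ℕ) : ℝ) = (i : ℝ) + 1 := by push_cast; ring
      rw [hcast, dff_vandermonde lam (i : ℝ) 1 n, Finset.mul_sum]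
      apply Finset.sum_congr rfl
      intro m hm
      ring
    rw [Finset.sum_congr rfl e4, Finset.sum_comm]
    apply Finset.sum_congr rfl
    intro m hm
    rw [Sd, Finset.mul_sum]
  rw [e3, Finset.sum_range_succ]
  simp only [Nat.choose_self, Nat.cast_one, Nat.sub_self, dff_zero', one_mul, mul_one]
  ring

lemma Sd_eq_zero (lam : ℝ) : ∀ n k : ℕ, n < k → Sd lam n k = 0 := by
  intro n
  induction n using Nat.strong_induction_on with
  | _ n ih =>
    intro k hk
    obtain ⟨k', rfl⟩ : ∃ k', k = k' + 1 := ⟨k - 1, by omega⟩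
    rw [Sd_rec]
    apply Finset.sum_eq_zero
    intro m hm
    rw [Finset.mem_range] at hm
    rw [ih m hm k' (by omega), mul_zero]

theorem stmt_13 (k : ℕ) (lam t : ℝ) (ht : |lam * t| < 1) :
    HasSum (fun n : ℕ => dStirling lam n k * t ^ n / n.factorial)
      ((1 / (k.factorial : ℝ)) * (dexp lam t - 1) ^ k) ∧
    ∀ n < k, dStirling lam n k = 0 := by
  constructor
  · have hj : ∀ j ∈ Finset.range (k + 1), HasSum
        (fun n : ℕ => (-1 : ℝ) ^ (k - j) * (k.choose j : ℝ) *
          (dff lam (j : ℝ) n * t ^ n / n.factorial))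
        ((-1 : ℝ) ^ (k - j) * (k.choose j : ℝ) * (dexp lam t) ^ j) :=
      fun j _ => (hasSum_dexp_pow lam t ht j).mul_left _
    have hs := (hasSum_sum hj).mul_left (1 / (k.factorial : ℝ))
    have hfun : (fun n : ℕ => (1 / (k.factorial : ℝ)) * ∑ j ∈ Finset.range (k + 1),
          (-1 : ℝ) ^ (k - j) * (k.choose j : ℝ) * (dff lam (j : ℝ) n * t ^ n / n.factorial))
        = fun n : ℕ => dStirling lam n k * t ^ n / n.factorial := by
      funext n
      rw [dStirling, Finset.mul_sum, Finset.mul_sum]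
      rw [Finset.sum_mul, Finset.sum_div]
      apply Finset.sum_congr rfl
      intro j _
      ring
    have hval : (∑ j ∈ Finset.range (k + 1),
          (-1 : ℝ) ^ (k - j) * (k.choose j : ℝ) * (dexp lam t) ^ j)
        = (dexp lam t - 1) ^ k := by
      rw [sub_pow]
      apply Finset.sum_congr rfl
      intro j hj'
      rw [Finset.mem_range] at hj'
      have hsig : (-1 : ℝ) ^ (k - j) = (-1) ^ (j + k) := by
        rw [show j + k = (k - j) + 2 * j by omega, pow_add, pow_mul, neg_one_sq, one_pow,
          mul_one]
      rw [hsig, one_pow]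
      ring
    rw [hfun, hval] at hs
    exact hs
  · intro n hn
    rw [dStirling_eq, Sd_eq_zero lam n k hn, mul_zero]
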